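/- Let f(x) = exp(−x^b) for x ≥ 1 with b > 0. Then the integral ∫_1^∞ (∫_1^x 1/f(y) dy) f(x) dx is infinite if and only if b ≤ 2. -/

import Mathlib

/-!
With `I x = ∫_1^x exp (y ^ b) dy`, the integrand is `I x * exp (-x ^ b)`, and `I x` is comparable
to `exp (x ^ b)` divided by the derivative `b x ^ (b - 1)` of the exponent.
For `b ≥ 1` the primitive estimate `I x ≤ x ^ (1 - b) exp (x ^ b)` makes the integrand at most
`x ^ (1 - b)`, integrable at infinity when `b > 2`. For `b ≤ 2` the last window `[x - 1/x, x]`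
alone gives `I x ≥ exp (x ^ b - 2) / x`, because `x ^ b` grows by at most `2` across it
(compare squares and use subadditivity of `t ↦ t ^ (b / 2)`); the integrand is then at least
`exp (-2) / x`, which is not integrable.
-/

open MeasureTheory Set Real

lemma rpow_sub_rpow_le_rpow_sq_sub_sq {b s x : ℝ} (hb0 : 0 ≤ b) (hb2 : b ≤ 2) (hs : 0 ≤ s)
    (hsx : s ≤ x) : x ^ b - s ^ b ≤ (x ^ 2 - s ^ 2) ^ (b / 2) := by
  have sq_rpow : ∀ t : ℝ, 0 ≤ t → (t ^ 2) ^ (b / 2) = t ^ b := fun t ht => by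
    rw [← rpow_natCast, ← rpow_mul ht]
    ring_nf
  have subadd := rpow_add_le_add_rpow (sq_nonneg s) (sub_nonneg.2 (pow_le_pow_left₀ hs hsx 2))
    (by linarith) (by linarith : b / 2 ≤ 1)
  rw [add_sub_cancel, sq_rpow s hs, sq_rpow x (hs.trans hsx)] at subadd
  linarith

lemma rpow_le_rpow_sub_inv_add_two {b x : ℝ} (hb0 : 0 ≤ b) (hb2 : b ≤ 2) (hx : 1 ≤ x) :
    x ^ b ≤ (x - x⁻¹) ^ b + 2 := by
  have hxinv : x⁻¹ ≤ 1 := inv_le_one_of_one_le₀ hx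
  have hxinv0 : 0 ≤ x⁻¹ := inv_nonneg.2 (zero_le_one.trans hx)
  have hdiff : x ^ 2 - (x - x⁻¹) ^ 2 = 2 - x⁻¹ ^ 2 := by
    field_simp
    ring
  have hwindow :=
    rpow_sub_rpow_le_rpow_sq_sub_sq hb0 hb2 (by linarith) (by linarith : x - x⁻¹ ≤ x)
  have hsmall : (2 - x⁻¹ ^ 2) ^ (b / 2) ≤ 2 := calc
    (2 - x⁻¹ ^ 2) ^ (b / 2) ≤ (2 : ℝ) ^ (b / 2) :=
      rpow_le_rpow (by nlinarith) (by nlinarith) (by linarith)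
    _ ≤ (2 : ℝ) ^ (1 : ℝ) := rpow_le_rpow_of_exponent_le one_le_two (by linarith)
    _ = 2 := rpow_one 2
  rw [hdiff] at hwindow
  linarith

lemma exp_rpow_sub_two_div_le_integral {b x : ℝ} (hb0 : 0 ≤ b) (hb2 : b ≤ 2) (hx : 2 ≤ x) :
    exp (x ^ b - 2) / x ≤ ∫ y in Ioc 1 x, exp (y ^ b) := by
  have hcont : Continuous fun y : ℝ => exp (y ^ b) := (continuous_rpow_const hb0).rexp
  have hx0 : 0 < x := by linarith
  have hxinv : x⁻¹ ≤ 2⁻¹ := inv_anti₀ two_pos hx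
  have hxinv0 : 0 ≤ x⁻¹ := inv_nonneg.2 hx0.le
  set s := x - x⁻¹
  have hs : 1 ≤ s := by linarith
  have hexp : exp (x ^ b - 2) ≤ exp (s ^ b) :=
    exp_le_exp.2 (by linarith [rpow_le_rpow_sub_inv_add_two hb0 hb2 (by linarith : 1 ≤ x)])
  calc exp (x ^ b - 2) / x ≤ exp (s ^ b) * volume.real (Ioc s x) := by
        rw [Real.volume_real_Ioc_of_le (by linarith), sub_sub_cancel, div_eq_mul_inv]
        gcongr
    _ ≤ ∫ y in Ioc s x, exp (y ^ b) :=
        setIntegral_ge_of_const_le_real measurableSet_Ioc measure_Ioc_lt_top.ne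
          (fun y hy => exp_le_exp.2 (rpow_le_rpow (by linarith) hy.1.le hb0)) hcont.integrableOn_Ioc
    _ ≤ ∫ y in Ioc 1 x, exp (y ^ b) :=
        setIntegral_mono_set hcont.integrableOn_Ioc (ae_of_all _ fun y => (exp_pos _).le)
          (Ioc_subset_Ioc hs le_rfl).eventuallyLE

lemma integral_exp_rpow_le {b x : ℝ} (hb : 1 ≤ b) (hx : 1 ≤ x) :
    ∫ y in Ioc 1 x, exp (y ^ b) ≤ x ^ (1 - b) * exp (x ^ b) := by
  have hderiv : ∀ y ∈ Icc 1 x, HasDerivAt (fun y => y ^ (1 - b) * exp (y ^ b))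
      (((1 - b) * y ^ (-b) + b) * exp (y ^ b)) y := fun y hy => by
    have hy : 0 < y := zero_lt_one.trans_le hy.1
    refine ((hasDerivAt_rpow_const (p := 1 - b) (Or.inl hy.ne')).mul
      (hasDerivAt_rpow_const (p := b) (Or.inl hy.ne')).exp).congr_deriv ?_
    have hcancel : y ^ (1 - b) * y ^ (b - 1) = 1 := by
      rw [← rpow_add hy]; norm_num
    rw [show 1 - b - 1 = -b by ring]
    linear_combination (b * exp (y ^ b)) * hcancel
  have hslope : ∀ y ∈ Ioo 1 x, exp (y ^ b) ≤ ((1 - b) * y ^ (-b) + b) * exp (y ^ b) :=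
    fun y hy => by
      have : y ^ (-b) ≤ 1 := rpow_le_one_of_one_le_of_nonpos hy.1.le (by linarith)
      exact le_mul_of_one_le_left (exp_pos _).le (by nlinarith)
  have hftc := intervalIntegral.integral_le_sub_of_hasDeriv_right_of_le hx
    (fun y hy => (hderiv y hy).continuousAt.continuousWithinAt)
    (fun y hy => (hderiv y (Ioo_subset_Icc_self hy)).hasDerivWithinAt)
    ((continuous_rpow_const (by linarith)).rexp.integrableOn_Icc) hslope
  rw [intervalIntegral.integral_of_le hx, one_rpow, one_rpow, one_mul] at hftc
  linarith [exp_pos 1]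

lemma lintegral_Ioi_ofReal_inv_eq_top {a : ℝ} (ha : 0 ≤ a) :
    ∫⁻ x in Ioi a, ENNReal.ofReal x⁻¹ = ⊤ := by
  by_contra hfin
  refine not_integrableOn_Ioi_inv ((lintegral_ofReal_ne_top_iff_integrable
    measurable_inv.aestronglyMeasurable ?_).1 hfin)
  filter_upwards [ae_restrict_mem measurableSet_Ioi] with x hx
  exact inv_nonneg.2 (ha.trans hx.le)

/-- For the horn-domain profile f(x) = exp(−x^b), b > 0, the trap-domain
integral ∫_1^∞ (∫_1^x 1/f(y) dy) f(x) dx is infinite iff b ≤ 2. -/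
theorem horn_domain_trap_iff (b : ℝ) (hb : 0 < b) :
    (∫⁻ x in Ioi (1 : ℝ),
        ENNReal.ofReal ((∫ y in Ioc (1 : ℝ) x, (Real.exp (-(y ^ b)))⁻¹) *
          Real.exp (-(x ^ b))) = ⊤) ↔ b ≤ 2 := by
  simp only [exp_neg, inv_inv]
  rcases le_or_gt b 2 with hb2 | hb2
  · simp only [hb2, iff_true]
    have hdiv : ∫⁻ x in Ioi (2 : ℝ), ENNReal.ofReal (exp (-2) * x⁻¹) = ⊤ := by
      simp_rw [ENNReal.ofReal_mul (exp_pos _).le]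
      rw [lintegral_const_mul' _ _ ENNReal.ofReal_ne_top,
        lintegral_Ioi_ofReal_inv_eq_top zero_le_two,
        ENNReal.mul_top (ENNReal.ofReal_pos.2 (exp_pos _)).ne']
    refine top_unique (hdiv ▸ (setLIntegral_mono' measurableSet_Ioi fun x hx => ?_).trans
      (lintegral_mono_set (Ioi_subset_Ioi one_le_two)))
    refine ENNReal.ofReal_le_ofReal ((le_mul_inv_iff₀ (exp_pos _)).2 ?_)
    refine (le_of_eq ?_).trans (exp_rpow_sub_two_div_le_integral hb.le hb2 (le_of_lt hx))
    rw [sub_eq_add_neg, exp_add]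
    ring
  · simp only [hb2.not_ge, iff_false]
    refine ne_top_of_le_ne_top
      (integrableOn_Ioi_rpow_of_lt (by linarith : 1 - b < -1) one_pos).lintegral_lt_top.ne
      (setLIntegral_mono' measurableSet_Ioi fun x hx => ?_)
    exact ENNReal.ofReal_le_ofReal ((mul_inv_le_iff₀ (exp_pos _)).2
      (integral_exp_rpow_le (by linarith) (le_of_lt hx)))
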